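/- The first Boussinesq Hamiltonian operator A¹(φ,ψ) := (D_x(ψ), D_x(φ)) is a variational bivector on the Boussinesq system: ℓ(A¹(φ,ψ)) + A¹(ℓ*(φ,ψ)) = (0,0) for all (φ,ψ) ∈ R². -/
import Mathlib

/-!
STATEMENT 8: The first Boussinesq Hamiltonian operator `A¹(φ,ψ) := (D_x(ψ), D_x(φ))`
is a variational bivector on the Boussinesq system:
`ℓ(A¹(φ,ψ)) + A¹(ℓ*(φ,ψ)) = (0,0)` for all `(φ,ψ) ∈ R²`.
-/

open MvPolynomial

noncomputable section

/-- The polynomial algebra `R = ℝ[u₀,u₁,…,v₀,v₁,…]`; `X (.inl k)` is `u_k`,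
`X (.inr k)` is `v_k`. -/
abbrev BRing : Type := MvPolynomial (ℕ ⊕ ℕ) ℝ

/-- The jet variable `u_k`. -/
def uu (k : ℕ) : BRing := X (Sum.inl k)

/-- The jet variable `v_k`. -/
def vv (k : ℕ) : BRing := X (Sum.inr k)

/-- The total derivative `D_x`: `D_x(u_k) = u_{k+1}`, `D_x(v_k) = v_{k+1}`. -/
def Dx : Derivation ℝ BRing BRing :=
  mkDerivation ℝ fun i =>
    match i with
    | Sum.inl k => uu (k + 1)
    | Sum.inr k => vv (k + 1)

/-- The total derivative `D_t` of the Boussinesq system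
`u_t = u₁·v + u·v₁ + σ·v₃`, `v_t = u₁ + v·v₁`. -/
def Dt (σ : ℝ) : Derivation ℝ BRing BRing :=
  mkDerivation ℝ fun i =>
    match i with
    | Sum.inl k => (⇑Dx)^[k] (uu 1 * vv 0 + uu 0 * vv 1 + C σ * vv 3)
    | Sum.inr k => (⇑Dx)^[k] (uu 1 + vv 0 * vv 1)

/-- The linearization `ℓ` of the Boussinesq system. -/
def ell (σ : ℝ) (φ ψ : BRing) : BRing × BRing :=
  (Dt σ φ - vv 0 * Dx φ - vv 1 * φ - C σ * Dx (Dx (Dx ψ)) - uu 0 * Dx ψ - uu 1 * ψ,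
   -Dx φ + Dt σ ψ - vv 0 * Dx ψ - vv 1 * ψ)

/-- The adjoint linearization `ℓ*` of the Boussinesq system. -/
def ellStar (σ : ℝ) (φ ψ : BRing) : BRing × BRing :=
  (-Dt σ φ + vv 0 * Dx φ + Dx ψ,
   C σ * Dx (Dx (Dx φ)) + uu 0 * Dx φ - Dt σ ψ + vv 0 * Dx ψ)

/-- The first Boussinesq Hamiltonian operator `A¹(φ,ψ) = (D_x(ψ), D_x(φ))`. -/
def A1 (φ ψ : BRing) : BRing × BRing := (Dx ψ, Dx φ)

lemma Dx_uu (k : ℕ) : Dx (uu k) = uu (k + 1) := mkDerivation_X _ _ _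
lemma Dx_vv (k : ℕ) : Dx (vv k) = vv (k + 1) := mkDerivation_X _ _ _
lemma Dx_X_inl (k : ℕ) : Dx (X (Sum.inl k)) = X (Sum.inl (k + 1)) := mkDerivation_X _ _ _
lemma Dx_X_inr (k : ℕ) : Dx (X (Sum.inr k)) = X (Sum.inr (k + 1)) := mkDerivation_X _ _ _
lemma Dx_C (c : ℝ) : Dx (C c) = 0 := Derivation.map_algebraMap _ _

lemma DxDt_comm (σ : ℝ) (p : BRing) : Dx (Dt σ p) = Dt σ (Dx p) := by
  have h : ⁅Dx, Dt σ⁆ = 0 := by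
    apply derivation_ext
    rintro (k | k) <;>
      simp [Derivation.commutator_apply, Dt, mkDerivation_X, Dx_X_inl, Dx_X_inr, uu, vv,
        Function.iterate_succ_apply']
  have := congrArg (fun D : Derivation ℝ BRing BRing => D p) h
  simpa [Derivation.commutator_apply, sub_eq_zero] using this

/-- `A¹` is a variational bivector on the Boussinesq system. -/
theorem boussinesq_A1_is_variational_bivector (σ : ℝ) (φ ψ : BRing) :
    ell σ (A1 φ ψ).1 (A1 φ ψ).2 + A1 (ellStar σ φ ψ).1 (ellStar σ φ ψ).2 = (0, 0) := by
  have h1 := DxDt_comm σ φ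
  have h2 := DxDt_comm σ ψ
  simp only [ell, ellStar, A1, Prod.mk_add_mk, Prod.mk.injEq, map_add, map_neg, map_sub,
    Derivation.leibniz, smul_eq_mul]
  constructor <;> · simp [h1, h2, Dx_uu, Dx_vv, Dx_C]; ring

end
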